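/- arXiv:1711.05347 — 6 statements merged into one kernel-verified Lean document; each statement's English description precedes it below -/
import Mathlib

section
/- Fix an integer k ≥ 2. Consider the six vector fields on ℝ² given by V₁(x,y) = (1,0), V₂(x,y) = (x,0), V₃(x,y) = (0,y), V₄(x,y) = ((k−1)x², −x y), V₅(x,y) = (0, y^k), V₆(x,y) = (0, x y^k). Then V₁,…,V₆ are linearly independent over ℝ (as functions ℝ² → ℝ²), and their ℝ-linear span is closed under the Lie bracket of vector fields; in particular this span is a 6-dimensional real Lie algebra of vector fields (the point symmetry algebra of the ODE y y″ = k (y′)²). -/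
/-!
The Lie bracket is bilinear on differentiable vector fields and antisymmetric, so the span of
finitely many differentiable fields is closed under it as soon as the brackets `[Vᵢ, Vⱼ]`, `i < j`,
of the generators lie in it; for the six point symmetries these fifteen brackets are computed
directly. Linear independence follows by evaluating a vanishing
combination at a few points: the first component is `c₀ + c₁x + (k-1)c₃x²`, and the second then
reduces to `c₂y + c₄yᵏ + c₅xyᵏ`, whose monomials are distinct because `k ≠ 1`.
-/

open Submodule Set VectorField

namespace VectorField

variable {𝕜 E ι : Type*} [NontriviallyNormedField 𝕜] [NormedAddCommGroup E] [NormedSpace 𝕜 E]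
  {V : ι → E → E}

theorem differentiable_of_mem_span (hV : ∀ i, Differentiable 𝕜 (V i)) {A : E → E}
    (hA : A ∈ span 𝕜 (range V)) : Differentiable 𝕜 A := by
  induction hA using span_induction with
  | mem _ hx => obtain ⟨i, rfl⟩ := hx; exact hV i
  | zero => exact differentiable_const 0
  | add _ _ _ _ hx hy => exact hx.add hy
  | smul a _ _ hx => exact hx.const_smul a

theorem lieBracket_mem_span_of_forall (hV : ∀ i, Differentiable 𝕜 (V i))
    (hbr : ∀ i j, lieBracket 𝕜 (V i) (V j) ∈ span 𝕜 (range V)) {A B : E → E}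
    (hA : A ∈ span 𝕜 (range V)) (hB : B ∈ span 𝕜 (range V)) :
    lieBracket 𝕜 A B ∈ span 𝕜 (range V) := by
  have hdiff := fun C (hC : C ∈ span 𝕜 (range V)) x ↦ differentiable_of_mem_span hV hC x
  induction hA, hB using span_induction₂ with
  | mem_mem _ _ hx hy => obtain ⟨i, rfl⟩ := hx; obtain ⟨j, rfl⟩ := hy; exact hbr i j
  | zero_left => rw [lieBracket_zero_left]; exact zero_mem _
  | zero_right => rw [lieBracket_zero_right]; exact zero_mem _
  | add_left x y _ hx hy _ hxz hyz =>
    convert add_mem hxz hyz using 1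
    exact funext fun p ↦ lieBracket_add_left (hdiff x hx p) (hdiff y hy p)
  | add_right _ y z _ hy hz hxy hxz =>
    convert add_mem hxy hxz using 1
    exact funext fun p ↦ lieBracket_add_right (hdiff y hy p) (hdiff z hz p)
  | smul_left r x _ hx _ h =>
    convert smul_mem _ r h using 1
    exact funext fun p ↦ lieBracket_const_smul_left (hdiff x hx p)
  | smul_right r _ y _ hy h =>
    convert smul_mem _ r h using 1
    exact funext fun p ↦ lieBracket_const_smul_right (hdiff y hy p)

theorem lieBracket_mem_span_of_lt [LinearOrder ι] (hV : ∀ i, Differentiable 𝕜 (V i))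
    (hbr : ∀ i j, i < j → lieBracket 𝕜 (V i) (V j) ∈ span 𝕜 (range V)) {A B : E → E}
    (hA : A ∈ span 𝕜 (range V)) (hB : B ∈ span 𝕜 (range V)) :
    lieBracket 𝕜 A B ∈ span 𝕜 (range V) := by
  refine lieBracket_mem_span_of_forall hV (fun i j ↦ ?_) hA hB
  rcases lt_trichotomy i j with hij | rfl | hji
  · exact hbr i j hij
  · rw [lieBracket_self]; exact zero_mem _
  · convert neg_mem (hbr j i hji) using 1
    exact funext fun _ ↦ lieBracket_swap

end VectorField

def pointSymmetry (k : ℕ) : Fin 6 → ℝ × ℝ → ℝ × ℝ :=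
  ![fun _ => (1, 0),
    fun p => (p.1, 0),
    fun p => (0, p.2),
    fun p => (((k : ℝ) - 1) * p.1 ^ 2, -(p.1 * p.2)),
    fun p => (0, p.2 ^ k),
    fun p => (0, p.1 * p.2 ^ k)]

/-- Entry `(i, j)` holds the coordinates of `[Vᵢ, Vⱼ]` in the basis `pointSymmetry k`; only the
entries with `i < j` are meaningful, the others are left `0`. -/
def pointSymmetryStructureConst (k : ℕ) : Fin 6 → Fin 6 → Fin 6 → ℝ :=
  ![![0, Pi.single 0 1, 0, ![0, 2 * (k - 1), -1, 0, 0, 0], 0, Pi.single 4 1],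
    ![0, 0, 0, Pi.single 3 1, 0, Pi.single 5 1],
    ![0, 0, 0, 0, Pi.single 4 (k - 1), Pi.single 5 (k - 1)],
    ![0, 0, 0, 0, Pi.single 5 (1 - k), 0],
    0,
    0]

theorem differentiable_pointSymmetry (k : ℕ) (i : Fin 6) :
    Differentiable ℝ (pointSymmetry k i) := by
  fin_cases i <;>
    simp only [pointSymmetry, Fin.zero_eta, Fin.mk_one, Fin.reduceFinMk, Matrix.cons_val_zero,
      Matrix.cons_val_one, Matrix.cons_val] <;>
    fun_prop

theorem lieBracket_pointSymmetry (k : ℕ) {i j : Fin 6} (hij : i < j) :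
    lieBracket ℝ (pointSymmetry k i) (pointSymmetry k j) =
      ∑ l, pointSymmetryStructureConst k i j l • pointSymmetry k l := by
  -- for `k = m + 1` the exponent `k - 1` is `m`, and every identity becomes polynomial
  rcases k with _ | m <;> fin_cases i <;> fin_cases j <;> simp at hij <;> ext p <;>
    simp (disch := fun_prop) [lieBracket, pointSymmetry, pointSymmetryStructureConst,
      Fin.sum_univ_six, Pi.single_apply, DifferentiableAt.fderiv_prodMk, fderiv_fun_mul,
      fderiv_fun_pow, fderiv_fun_neg, fderiv_fst, fderiv_snd] <;> ring

theorem linearIndependent_pointSymmetry {k : ℕ} (hk : k ≠ 1) :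
    LinearIndependent ℝ (pointSymmetry k) := by
  rw [Fintype.linearIndependent_iff]
  intro c hc
  have hcomp (x y : ℝ) : c 0 + c 1 * x + c 3 * ((k - 1) * x ^ 2) = 0 ∧
      c 2 * y - c 3 * (x * y) + c 4 * y ^ k + c 5 * (x * y ^ k) = 0 := by
    simpa [Fin.sum_univ_six, pointSymmetry, Prod.ext_iff, ← sub_eq_add_neg] using congrFun hc (x, y)
  have hk₁ : (k - 1 : ℝ) ≠ 0 := sub_ne_zero.2 (mod_cast hk)
  have hk₂ : (2 : ℝ) ^ k - 2 ≠ 0 := sub_ne_zero.2 fun h ↦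
    hk (pow_right_injective₀ two_pos (by norm_num : (2 : ℝ) ≠ 1) (by simpa using h))
  have hc0 : c 0 = 0 := by simpa using (hcomp 0 0).1
  have hc3 : c 3 = 0 := by
    have h : (k - 1 : ℝ) * c 3 = 0 := by
      linear_combination ((hcomp 1 0).1 + (hcomp (-1) 0).1) / 2 - hc0
    exact (mul_eq_zero.1 h).resolve_left hk₁
  have hc1 : c 1 = 0 := by simpa [hc0, hc3] using (hcomp 1 0).1
  have hc4 : c 4 = 0 := by
    have h : ((2 : ℝ) ^ k - 2) * c 4 = 0 := by
      linear_combination (hcomp 0 2).2 - 2 * (hcomp 0 1).2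
    exact (mul_eq_zero.1 h).resolve_left hk₂
  have hc2 : c 2 = 0 := by simpa [hc4] using (hcomp 0 1).2
  have hc5 : c 5 = 0 := by simpa [hc2, hc3, hc4] using (hcomp 1 1).2
  intro i
  fin_cases i <;> assumption

/-- The six vector fields `∂ₓ, x∂ₓ, y∂_y, (k−1)x²∂ₓ − xy∂_y, y^k∂_y, xy^k∂_y`
(point symmetries of the ODE `y y″ = k (y′)²`, `k ≥ 2`) are linearly independent
and their span is closed under the Lie bracket of vector fields, hence forms a
6-dimensional real Lie algebra of vector fields. -/
theorem symmetry_algebra_of_yy''_eq_k_y'sq (k : ℕ) (hk : 2 ≤ k)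
    (V : Fin 6 → (ℝ × ℝ → ℝ × ℝ))
    (hV : V = ![fun _ => (1, 0),
                fun p => (p.1, 0),
                fun p => (0, p.2),
                fun p => (((k : ℝ) - 1) * p.1 ^ 2, -(p.1 * p.2)),
                fun p => (0, p.2 ^ k),
                fun p => (0, p.1 * p.2 ^ k)]) :
    LinearIndependent ℝ V ∧
    (∀ A B : ℝ × ℝ → ℝ × ℝ, A ∈ Submodule.span ℝ (Set.range V) →
      B ∈ Submodule.span ℝ (Set.range V) →
      VectorField.lieBracket ℝ A B ∈ Submodule.span ℝ (Set.range V)) ∧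
    Module.finrank ℝ (Submodule.span ℝ (Set.range V)) = 6 := by
  obtain rfl : V = pointSymmetry k := hV
  have hli : LinearIndependent ℝ (pointSymmetry k) := linearIndependent_pointSymmetry (by omega)
  refine ⟨hli, fun A B hA hB ↦ ?_, by simpa using finrank_span_eq_card hli⟩
  refine lieBracket_mem_span_of_lt (differentiable_pointSymmetry k) (fun i j hij ↦ ?_) hA hB
  exact mem_span_range_iff_exists_fun ℝ |>.2 ⟨_, (lieBracket_pointSymmetry k hij).symm⟩
end

section
/- Fix t ∈ ℝ and let u : ℝ → ℝ be twice differentiable on an open interval I with u(x)·u″(x) = 2·(u′(x))² for all x ∈ I. Define v(x) = u( x/(1+tx) ) / (1+tx). Then for every x with 1+tx ≠ 0 and x/(1+tx) ∈ I, the function v is twice differentiable at x and satisfies v(x)·v″(x) = 2·(v′(x))². (This expresses that x²∂ₓ − x y ∂_y is a point symmetry of the ODE y y″ = 2 (y′)².) -/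
/-!
Write `w = 1 + t x` and `projTransform t n f x = f (x / w) / wⁿ`. Since `(x / w)' = 1 / w²` and
`w' = t`, differentiating a transform of weight `n` gives transforms of weights `n + 2` and `n + 1`:
`(projTransform t n f)' = projTransform t (n + 2) f' - n t · projTransform t (n + 1) f`.
Applied to `v = projTransform t 1 u` this yields `v' = u'/w³ - t u/w²` and
`v'' = u''/w⁵ - 4t u'/w⁴ + 2t² u/w³`, so that `v v'' - 2v'² = (u u'' - 2u'²)/w⁶`.
-/

open Filter Topology

noncomputable def projTransform (t : ℝ) (n : ℕ) (f : ℝ → ℝ) (x : ℝ) : ℝ :=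
  f (x / (1 + t * x)) / (1 + t * x) ^ n

section

variable {t x : ℝ}

theorem hasDerivAt_div_one_add_mul (hx : 1 + t * x ≠ 0) :
    HasDerivAt (fun y => y / (1 + t * y)) (1 / (1 + t * x) ^ 2) x := by
  have hw : HasDerivAt (fun y => 1 + t * y) t x := by
    simpa using ((hasDerivAt_id x).const_mul t).const_add 1
  refine ((hasDerivAt_id x).fun_div hw hx).congr_deriv ?_
  simp only [id]
  ring

theorem hasDerivAt_projTransform {n : ℕ} {f : ℝ → ℝ}
    (hf : DifferentiableAt ℝ f (x / (1 + t * x))) (hx : 1 + t * x ≠ 0) :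
    HasDerivAt (projTransform t n f)
      (projTransform t (n + 2) (deriv f) x - n * t * projTransform t (n + 1) f x) x := by
  have hw : HasDerivAt (fun y => (1 + t * y) ^ n) (n * (1 + t * x) ^ (n - 1) * t) x := by
    simpa using (((hasDerivAt_id x).const_mul t).const_add 1).fun_pow n
  refine ((hf.hasDerivAt.comp x (hasDerivAt_div_one_add_mul hx)).fun_div hw
    (pow_ne_zero n hx)).congr_deriv ?_
  simp only [projTransform, Function.comp_apply]
  generalize f (x / (1 + t * x)) = A
  generalize deriv f (x / (1 + t * x)) = B
  generalize 1 + t * x = w at hx ⊢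
  rcases n with _ | n
  · field_simp
    ring
  · field_simp
    push_cast
    ring

theorem eventually_one_add_mul_ne_zero_and_div_mem {s : Set ℝ} (hx : 1 + t * x ≠ 0)
    (hs : s ∈ 𝓝 (x / (1 + t * x))) :
    ∀ᶠ y in 𝓝 x, 1 + t * y ≠ 0 ∧ y / (1 + t * y) ∈ s :=
  ((by fun_prop : Continuous fun y => 1 + t * y).continuousAt.eventually_ne hx).and
    ((hasDerivAt_div_one_add_mul hx).continuousAt.eventually_mem hs)

end

/-- `x²∂ₓ − xy∂_y` is a point symmetry of the ODE `y y″ = 2 (y′)²`: the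
transformed solution `v(x) = u(x/(1+tx))/(1+tx)` again satisfies the equation. -/
theorem projective_symmetry_of_yy''_eq_2y'sq (t : ℝ) (a b : ℝ) (u : ℝ → ℝ)
    (hu₁ : ∀ x ∈ Set.Ioo a b, DifferentiableAt ℝ u x)
    (hu₂ : ∀ x ∈ Set.Ioo a b, DifferentiableAt ℝ (deriv u) x)
    (hode : ∀ x ∈ Set.Ioo a b, u x * deriv (deriv u) x = 2 * (deriv u x) ^ 2)
    (v : ℝ → ℝ)
    (hv : v = fun x => u (x / (1 + t * x)) / (1 + t * x)) :
    ∀ x : ℝ, 1 + t * x ≠ 0 → x / (1 + t * x) ∈ Set.Ioo a b →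
      DifferentiableAt ℝ v x ∧ DifferentiableAt ℝ (deriv v) x ∧
      v x * deriv (deriv v) x = 2 * (deriv v x) ^ 2 := by
  intro x hx hgx
  set v' := fun y => projTransform t 3 (deriv u) y - t * projTransform t 2 u y
  have hv_eq : v = projTransform t 1 u := by
    ext y
    simp only [hv, projTransform, pow_one]
  have hv_deriv :
      ∀ y, 1 + t * y ≠ 0 → y / (1 + t * y) ∈ Set.Ioo a b → HasDerivAt v (v' y) y := by
    intro y hy hgy
    rw [hv_eq]
    simpa using hasDerivAt_projTransform (n := 1) (hu₁ _ hgy) hy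
  have hderiv_v : deriv v =ᶠ[𝓝 x] v' :=
    (eventually_one_add_mul_ne_zero_and_div_mem hx (isOpen_Ioo.mem_nhds hgx)).mono
      fun y hy => (hv_deriv y hy.1 hy.2).deriv
  have hv'_deriv := ((hasDerivAt_projTransform (n := 3) (hu₂ _ hgx) hx).sub
    ((hasDerivAt_projTransform (n := 2) (hu₁ _ hgx) hx).const_mul t)).congr_of_eventuallyEq
    hderiv_v
  refine ⟨(hv_deriv x hx hgx).differentiableAt, hv'_deriv.differentiableAt, ?_⟩
  rw [hv'_deriv.deriv, (hv_deriv x hx hgx).deriv, hv_eq]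
  have hode_x := hode _ hgx
  simp only [v', projTransform]
  generalize u (x / (1 + t * x)) = A at hode_x ⊢
  generalize deriv u (x / (1 + t * x)) = B at hode_x ⊢
  generalize deriv (deriv u) (x / (1 + t * x)) = C at hode_x ⊢
  generalize 1 + t * x = w at hx ⊢
  field_simp
  linear_combination w ^ 12 * hode_x
end

section
/- Fix t ∈ ℝ and let u : ℝ → ℝ be twice differentiable on an open interval I with u(x)·u″(x) = 2·(u′(x))² and 1 − t·x·u(x) ≠ 0 for all x ∈ I. Then the function v(x) = u(x)/(1 − t·x·u(x)) is twice differentiable on I and satisfies v(x)·v″(x) = 2·(v′(x))² for all x ∈ I. (This expresses that x y²∂_y is a point symmetry of the ODE y y″ = 2 (y′)².) -/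
/-!
Write `w = 1 - t x u` for the denominator, so that `v = u / w`. Differentiating twice gives
`v' = (u' + t u²) / w²` and `v'' = ((u'' + 2 t u u') w + 2 t (u' + t u²)(u + x u')) / w³`.
Substituting `u u'' = 2 u'²`, the numerator of `v v''` becomes `2 (u' + t u²)²`, which is
exactly the numerator of `2 v'²`.
-/

open Set Filter Topology

section
variable {u p : ℝ → ℝ} {t x u' p' : ℝ}

theorem HasDerivAt.one_sub_const_mul_mul_self (hu : HasDerivAt u u' x) :
    HasDerivAt (fun y => 1 - t * y * u y) (-(t * u x + t * x * u')) x :=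
  (((hasDerivAt_id' x).const_mul t).fun_mul hu).const_sub 1 |>.congr_deriv (by ring)

theorem HasDerivAt.div_one_sub_const_mul_mul_self (hu : HasDerivAt u u' x)
    (hne : 1 - t * x * u x ≠ 0) :
    HasDerivAt (fun y => u y / (1 - t * y * u y))
      ((u' + t * u x ^ 2) / (1 - t * x * u x) ^ 2) x := by
  refine (hu.fun_div hu.one_sub_const_mul_mul_self hne).congr_deriv ?_
  field_simp
  ring

theorem HasDerivAt.add_const_mul_sq_div_one_sub_const_mul_mul_self_sq
    (hu : HasDerivAt u (p x) x) (hp : HasDerivAt p p' x) (hne : 1 - t * x * u x ≠ 0) :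
    HasDerivAt (fun y => (p y + t * u y ^ 2) / (1 - t * y * u y) ^ 2)
      (((p' + 2 * t * u x * p x) * (1 - t * x * u x)
          + 2 * t * (p x + t * u x ^ 2) * (u x + x * p x)) / (1 - t * x * u x) ^ 3) x := by
  have hnum : HasDerivAt (fun y => p y + t * u y ^ 2) (p' + 2 * t * u x * p x) x :=
    hp.fun_add ((hu.fun_pow 2).const_mul t) |>.congr_deriv (by ring)
  refine (hnum.fun_div (hu.one_sub_const_mul_mul_self.fun_pow 2) (pow_ne_zero 2 hne)).congr_deriv ?_
  rw [div_eq_div_iff (by positivity) (by positivity)]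
  ring

end

theorem div_mul_eq_two_mul_sq_of_mul_eq_two_mul_sq {t x U U' U'' : ℝ}
    (hode : U * U'' = 2 * U' ^ 2) (hne : 1 - t * x * U ≠ 0) :
    U / (1 - t * x * U) *
        (((U'' + 2 * t * U * U') * (1 - t * x * U)
          + 2 * t * (U' + t * U ^ 2) * (U + x * U')) / (1 - t * x * U) ^ 3) =
      2 * ((U' + t * U ^ 2) / (1 - t * x * U) ^ 2) ^ 2 := by
  rw [div_mul_div_comm, div_pow, mul_div_assoc', div_eq_div_iff (by positivity) (by positivity)]
  linear_combination (1 - t * x * U) ^ 5 * hode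

/-- `xy²∂_y` is a point symmetry of the ODE `y y″ = 2 (y′)²`: the transformed
solution `v(x) = u(x)/(1 − t·x·u(x))` again satisfies the equation. -/
theorem xy_sq_dy_symmetry_of_yy''_eq_2y'sq (t : ℝ) (a b : ℝ) (u : ℝ → ℝ)
    (hu₁ : ∀ x ∈ Set.Ioo a b, DifferentiableAt ℝ u x)
    (hu₂ : ∀ x ∈ Set.Ioo a b, DifferentiableAt ℝ (deriv u) x)
    (hode : ∀ x ∈ Set.Ioo a b, u x * deriv (deriv u) x = 2 * (deriv u x) ^ 2)
    (hne : ∀ x ∈ Set.Ioo a b, 1 - t * x * u x ≠ 0)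
    (v : ℝ → ℝ)
    (hv : v = fun x => u x / (1 - t * x * u x)) :
    ∀ x ∈ Set.Ioo a b,
      DifferentiableAt ℝ v x ∧ DifferentiableAt ℝ (deriv v) x ∧
      v x * deriv (deriv v) x = 2 * (deriv v x) ^ 2 := by
  subst hv
  have hv' : ∀ y ∈ Ioo a b, HasDerivAt (fun y => u y / (1 - t * y * u y))
      ((deriv u y + t * u y ^ 2) / (1 - t * y * u y) ^ 2) y :=
    fun y hy => (hu₁ y hy).hasDerivAt.div_one_sub_const_mul_mul_self (hne y hy)
  intro x hx
  have hderiv_v : deriv (fun y => u y / (1 - t * y * u y)) =ᶠ[𝓝 x]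
      fun y => (deriv u y + t * u y ^ 2) / (1 - t * y * u y) ^ 2 :=
    eventually_of_mem (isOpen_Ioo.mem_nhds hx) fun y hy => (hv' y hy).deriv
  have hv'' := ((hu₁ x hx).hasDerivAt.add_const_mul_sq_div_one_sub_const_mul_mul_self_sq
    (hu₂ x hx).hasDerivAt (hne x hx)).congr_of_eventuallyEq hderiv_v
  refine ⟨(hv' x hx).differentiableAt, hv''.differentiableAt, ?_⟩
  rw [hv''.deriv, (hv' x hx).deriv]
  exact div_mul_eq_two_mul_sq_of_mul_eq_two_mul_sq (hode x hx) (hne x hx)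
end

section
/- Consider the five vector fields on ℝ² given by W₁(x,y) = (x,0), W₂(x,y) = (0,y), W₃(x,y) = (0,y²), W₄(x,y) = (0, x³y²), W₅(x,y) = (x⁴, −3x³y). Then W₁,…,W₅ are linearly independent over ℝ (as functions ℝ² → ℝ²), and their ℝ-linear span is closed under the Lie bracket of vector fields; in particular this span is a 5-dimensional real Lie algebra of vector fields (the point symmetry algebra of the ODE x y y″ = 2 y′ (x y′ + y)). -/
/-!
The bracket is bilinear on differentiable fields and antisymmetric, so the span is closed under
it as soon as the brackets of distinct generators lie in it. Those ten brackets are computed from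
the Jacobians of the polynomial fields: `[W₁, W₄] = 3 W₄`, `[W₁, W₅] = 3 W₅`, `[W₂, W₃] = W₃`,
`[W₂, W₄] = W₄`, `[W₃, W₅] = 3 W₄`, and the other five vanish. Linear independence follows by
evaluating a vanishing combination at five points.
-/

namespace VectorField

variable {𝕜 : Type*} [NontriviallyNormedField 𝕜] {E : Type*} [NormedAddCommGroup E]
  [NormedSpace 𝕜 E] {ι : Type*} [Fintype ι] {F : ι → E → E}

theorem lieBracket_sum_smul_sum_smul (hF : ∀ i, Differentiable 𝕜 (F i)) (a b : ι → 𝕜) :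
    lieBracket 𝕜 (∑ i, a i • F i) (∑ j, b j • F j) =
      ∑ i, ∑ j, (a i * b j) • lieBracket 𝕜 (F i) (F j) := by
  have hsum (c : ι → 𝕜) : (∑ i, c i • F i) = fun y => ∑ i, c i • F i y := by
    funext y; simp
  have hfderiv (c : ι → 𝕜) (y : E) :
      fderiv 𝕜 (fun z => ∑ i, c i • F i z) y = ∑ i, c i • fderiv 𝕜 (F i) y := by
    rw [fderiv_fun_sum (A := fun i z => c i • F i z) fun i _ => (hF i y).const_smul (c i)]
    exact Finset.sum_congr rfl fun i _ => fderiv_fun_const_smul (hF i y) (c i)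
  funext x
  simp only [lieBracket_eq, hsum, hfderiv, FunLike.coe_sum, FunLike.coe_smul,
    Finset.sum_apply, Pi.smul_apply, map_sum, map_smul,
    Finset.smul_sum, smul_sub, smul_smul, Finset.sum_sub_distrib]
  rw [Finset.sum_comm (f := fun i j => (a i * b j) • (fderiv 𝕜 (F i) x) (F j x))]
  simp only [mul_comm]

theorem lieBracket_mem_span_range [LinearOrder ι] (hF : ∀ i, Differentiable 𝕜 (F i))
    (hFF : ∀ i j, i < j → lieBracket 𝕜 (F i) (F j) ∈ Submodule.span 𝕜 (Set.range F))
    {A B : E → E} (hA : A ∈ Submodule.span 𝕜 (Set.range F))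
    (hB : B ∈ Submodule.span 𝕜 (Set.range F)) :
    lieBracket 𝕜 A B ∈ Submodule.span 𝕜 (Set.range F) := by
  have hall (i j : ι) : lieBracket 𝕜 (F i) (F j) ∈ Submodule.span 𝕜 (Set.range F) := by
    rcases lt_trichotomy i j with hij | rfl | hji
    · exact hFF i j hij
    · simp [lieBracket_self]
    · have hswap : lieBracket 𝕜 (F i) (F j) = -lieBracket 𝕜 (F j) (F i) :=
        funext fun x => lieBracket_swap
      rw [hswap]
      exact Submodule.neg_mem _ (hFF j i hji)
  obtain ⟨a, rfl⟩ := (Submodule.mem_span_range_iff_exists_fun _).mp hA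
  obtain ⟨b, rfl⟩ := (Submodule.mem_span_range_iff_exists_fun _).mp hB
  rw [lieBracket_sum_smul_sum_smul hF]
  exact Submodule.sum_mem _ fun i _ => Submodule.sum_mem _ fun j _ =>
    Submodule.smul_mem _ _ (hall i j)

end VectorField

namespace XyyODE

open VectorField

def W₁ : ℝ × ℝ → ℝ × ℝ := fun p => (p.1, 0)
def W₂ : ℝ × ℝ → ℝ × ℝ := fun p => (0, p.2)
def W₃ : ℝ × ℝ → ℝ × ℝ := fun p => (0, p.2 ^ 2)
def W₄ : ℝ × ℝ → ℝ × ℝ := fun p => (0, p.1 ^ 3 * p.2 ^ 2)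
def W₅ : ℝ × ℝ → ℝ × ℝ := fun p => (p.1 ^ 4, -(3 * p.1 ^ 3 * p.2))

def symmetryFields : Fin 5 → ℝ × ℝ → ℝ × ℝ := ![W₁, W₂, W₃, W₄, W₅]

theorem differentiable_symmetryFields (i : Fin 5) : Differentiable ℝ (symmetryFields i) := by
  unfold symmetryFields W₁ W₂ W₃ W₄ W₅
  fin_cases i <;> simp <;> fun_prop

theorem fderiv_W₁_apply (p v : ℝ × ℝ) : fderiv ℝ W₁ p v = (v.1, 0) := by
  unfold W₁
  rw [DifferentiableAt.fderiv_prodMk (by fun_prop) (by fun_prop)]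
  simp [fderiv_fst]

theorem fderiv_W₂_apply (p v : ℝ × ℝ) : fderiv ℝ W₂ p v = (0, v.2) := by
  unfold W₂
  rw [DifferentiableAt.fderiv_prodMk (by fun_prop) (by fun_prop)]
  simp [fderiv_snd]

theorem fderiv_W₃_apply (p v : ℝ × ℝ) : fderiv ℝ W₃ p v = (0, 2 * p.2 * v.2) := by
  unfold W₃
  rw [DifferentiableAt.fderiv_prodMk (by fun_prop) (by fun_prop)]
  simp (disch := fun_prop) [fderiv_fun_pow, fderiv_snd]

theorem fderiv_W₄_apply (p v : ℝ × ℝ) :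
    fderiv ℝ W₄ p v = (0, 3 * p.1 ^ 2 * p.2 ^ 2 * v.1 + 2 * p.1 ^ 3 * p.2 * v.2) := by
  unfold W₄
  rw [DifferentiableAt.fderiv_prodMk (by fun_prop) (by fun_prop)]
  simp (disch := fun_prop) [fderiv_fun_mul, fderiv_fun_pow, fderiv_fst, fderiv_snd]
  ring

theorem fderiv_W₅_apply (p v : ℝ × ℝ) :
    fderiv ℝ W₅ p v = (4 * p.1 ^ 3 * v.1, -(9 * p.1 ^ 2 * p.2 * v.1 + 3 * p.1 ^ 3 * v.2)) := by
  unfold W₅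
  rw [DifferentiableAt.fderiv_prodMk (by fun_prop) (by fun_prop)]
  simp (disch := fun_prop) [fderiv_fun_mul, fderiv_fun_pow, fderiv_fst, fderiv_snd]
  ring

theorem lieBracket_W₁_W₂ : lieBracket ℝ W₁ W₂ = 0 := by
  ext p <;> simp [lieBracket_eq, fderiv_W₁_apply, fderiv_W₂_apply, W₁, W₂]

theorem lieBracket_W₁_W₃ : lieBracket ℝ W₁ W₃ = 0 := by
  ext p <;> simp [lieBracket_eq, fderiv_W₁_apply, fderiv_W₃_apply, W₁, W₃]

theorem lieBracket_W₁_W₄ : lieBracket ℝ W₁ W₄ = (3 : ℝ) • W₄ := by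
  ext p <;> simp [lieBracket_eq, fderiv_W₁_apply, fderiv_W₄_apply, W₁, W₄]
  ring

theorem lieBracket_W₁_W₅ : lieBracket ℝ W₁ W₅ = (3 : ℝ) • W₅ := by
  ext p <;> simp [lieBracket_eq, fderiv_W₁_apply, fderiv_W₅_apply, W₁, W₅] <;> ring

theorem lieBracket_W₂_W₃ : lieBracket ℝ W₂ W₃ = W₃ := by
  ext p <;> simp [lieBracket_eq, fderiv_W₂_apply, fderiv_W₃_apply, W₂, W₃]
  ring

theorem lieBracket_W₂_W₄ : lieBracket ℝ W₂ W₄ = W₄ := by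
  ext p <;> simp [lieBracket_eq, fderiv_W₂_apply, fderiv_W₄_apply, W₂, W₄]
  ring

theorem lieBracket_W₂_W₅ : lieBracket ℝ W₂ W₅ = 0 := by
  ext p <;> simp [lieBracket_eq, fderiv_W₂_apply, fderiv_W₅_apply, W₂, W₅]

theorem lieBracket_W₃_W₄ : lieBracket ℝ W₃ W₄ = 0 := by
  ext p <;> simp [lieBracket_eq, fderiv_W₃_apply, fderiv_W₄_apply, W₃, W₄]
  ring

theorem lieBracket_W₃_W₅ : lieBracket ℝ W₃ W₅ = (3 : ℝ) • W₄ := by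
  ext p <;> simp [lieBracket_eq, fderiv_W₃_apply, fderiv_W₅_apply, W₃, W₄, W₅]
  ring

theorem lieBracket_W₄_W₅ : lieBracket ℝ W₄ W₅ = 0 := by
  ext p <;> simp [lieBracket_eq, fderiv_W₄_apply, fderiv_W₅_apply, W₄, W₅]
  ring

theorem lieBracket_symmetryFields_mem_span (i j : Fin 5) (hij : i < j) :
    lieBracket ℝ (symmetryFields i) (symmetryFields j) ∈
      Submodule.span ℝ (Set.range symmetryFields) := by
  fin_cases i <;> fin_cases j <;> simp at hij <;>
    simp [symmetryFields, lieBracket_W₁_W₂, lieBracket_W₁_W₃, lieBracket_W₁_W₄, lieBracket_W₁_W₅,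
      lieBracket_W₂_W₃, lieBracket_W₂_W₄, lieBracket_W₂_W₅, lieBracket_W₃_W₄, lieBracket_W₃_W₅,
      lieBracket_W₄_W₅, Submodule.mem_span_of_mem]

theorem linearIndependent_symmetryFields : LinearIndependent ℝ symmetryFields := by
  rw [Fintype.linearIndependent_iff]
  intro c hc
  have hval (p : ℝ × ℝ) := congrFun hc p
  simp [Fin.sum_univ_five, symmetryFields, W₁, W₂, W₃, W₄, W₅] at hval
  obtain ⟨h₁, -⟩ := hval 1 0
  obtain ⟨h₂, -⟩ := hval 2 0
  obtain ⟨-, h₃⟩ := hval 0 1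
  obtain ⟨-, h₄⟩ := hval 0 2
  obtain ⟨-, h₅⟩ := hval 1 1
  norm_num at h₁ h₂ h₃ h₄ h₅
  intro i
  fin_cases i <;> simp <;> linarith

end XyyODE

open VectorField XyyODE in
/-- The five vector fields `x∂ₓ, y∂_y, y²∂_y, x³y²∂_y, x⁴∂ₓ − 3x³y∂_y`
(point symmetries of the ODE `x y y″ = 2 y′ (x y′ + y)`) are linearly
independent and their span is closed under the Lie bracket of vector fields,
hence forms a 5-dimensional real Lie algebra of vector fields. -/
theorem symmetry_algebra_of_xyy''_eq_2y'_xy'_plus_y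
    (W : Fin 5 → (ℝ × ℝ → ℝ × ℝ))
    (hW : W = ![fun p => (p.1, 0),
                fun p => (0, p.2),
                fun p => (0, p.2 ^ 2),
                fun p => (0, p.1 ^ 3 * p.2 ^ 2),
                fun p => (p.1 ^ 4, -(3 * p.1 ^ 3 * p.2))]) :
    LinearIndependent ℝ W ∧
    (∀ A B : ℝ × ℝ → ℝ × ℝ, A ∈ Submodule.span ℝ (Set.range W) →
      B ∈ Submodule.span ℝ (Set.range W) →
      VectorField.lieBracket ℝ A B ∈ Submodule.span ℝ (Set.range W)) ∧
    Module.finrank ℝ (Submodule.span ℝ (Set.range W)) = 5 := by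
  obtain rfl : W = symmetryFields := hW
  refine ⟨linearIndependent_symmetryFields, fun A B hA hB => ?_, ?_⟩
  · exact lieBracket_mem_span_range differentiable_symmetryFields
      lieBracket_symmetryFields_mem_span hA hB
  · rw [finrank_span_eq_card linearIndependent_symmetryFields, Fintype.card_fin]
end

section
/- Fix t ∈ ℝ and let u : ℝ → ℝ be twice differentiable on an open interval I with x·u(x)·u″(x) = 2·u′(x)·(x·u′(x) + u(x)) and 1 − t·u(x) ≠ 0 for all x ∈ I. Then the function v(x) = u(x)/(1 − t·u(x)) is twice differentiable on I and satisfies x·v(x)·v″(x) = 2·v′(x)·(x·v′(x) + v(x)) for all x ∈ I. (This expresses that y²∂_y is a point symmetry of the ODE x y y″ = 2 y′ (x y′ + y).) -/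
/-!
Write `w = 1 - t u`, so `v = u / w`. Then `v' = u' / w²` and `v'' = (u'' w + 2 t u'²) / w³`,
and a direct computation gives
`x v v'' - 2 v' (x v' + v) = (x u u'' - 2 u' (x u' + u)) / w³`,
so the residual of the equation for `v` vanishes wherever that of `u` does.
-/

open Filter Topology

section

variable {𝕜 : Type*} [NontriviallyNormedField 𝕜]

theorem hasDerivAt_deriv_of_eventually_hasDerivAt {F : Type*} [NormedAddCommGroup F]
    [NormedSpace 𝕜 F] {f f' : 𝕜 → F} {f'' : F} {x : 𝕜}
    (hf : ∀ᶠ y in 𝓝 x, HasDerivAt f (f' y) y) (hf' : HasDerivAt f' f'' x) :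
    HasDerivAt (deriv f) f'' x :=
  hf'.congr_of_eventuallyEq (hf.mono fun _ hy => hy.deriv)

variable {u u' : 𝕜 → 𝕜} {t x u'₀ u'' : 𝕜}

theorem hasDerivAt_div_one_sub_mul (hu : HasDerivAt u u'₀ x) (hw : 1 - t * u x ≠ 0) :
    HasDerivAt (fun y => u y / (1 - t * u y)) (u'₀ / (1 - t * u x) ^ 2) x := by
  have hw' : HasDerivAt (fun y => 1 - t * u y) (-(t * u'₀)) x := by
    simpa using (hu.const_mul t).const_sub 1
  exact (hu.div hw' hw).congr_deriv (by ring)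

theorem hasDerivAt_div_one_sub_mul_sq (hu : HasDerivAt u (u' x) x) (hu' : HasDerivAt u' u'' x)
    (hw : 1 - t * u x ≠ 0) :
    HasDerivAt (fun y => u' y / (1 - t * u y) ^ 2)
      ((u'' * (1 - t * u x) + 2 * t * u' x ^ 2) / (1 - t * u x) ^ 3) x := by
  have hw' : HasDerivAt (fun y => 1 - t * u y) (-(t * u' x)) x := by
    simpa using (hu.const_mul t).const_sub 1
  exact (hu'.div (hw'.pow 2) (pow_ne_zero 2 hw)).congr_deriv
    (by simp only [Pi.pow_apply]; field_simp; ring)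

theorem xyy''_ode_div_one_sub_mul {t x u u' u'' : 𝕜} (hw : 1 - t * u ≠ 0)
    (h : x * u * u'' = 2 * u' * (x * u' + u)) :
    x * (u / (1 - t * u)) * ((u'' * (1 - t * u) + 2 * t * u' ^ 2) / (1 - t * u) ^ 3) =
      2 * (u' / (1 - t * u) ^ 2) * (x * (u' / (1 - t * u) ^ 2) + u / (1 - t * u)) := by
  set w := 1 - t * u with hw_def
  field_simp
  linear_combination w * h + 2 * x * u' ^ 2 * hw_def

end

/-- `y²∂_y` is a point symmetry of the ODE `x y y″ = 2 y′ (x y′ + y)`: the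
transformed solution `v(x) = u(x)/(1 − t·u(x))` again satisfies the equation. -/
theorem y_sq_dy_symmetry_of_xyy''_ode (t : ℝ) (a b : ℝ) (u : ℝ → ℝ)
    (hu₁ : ∀ x ∈ Set.Ioo a b, DifferentiableAt ℝ u x)
    (hu₂ : ∀ x ∈ Set.Ioo a b, DifferentiableAt ℝ (deriv u) x)
    (hode : ∀ x ∈ Set.Ioo a b,
      x * u x * deriv (deriv u) x = 2 * deriv u x * (x * deriv u x + u x))
    (hne : ∀ x ∈ Set.Ioo a b, 1 - t * u x ≠ 0)
    (v : ℝ → ℝ)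
    (hv : v = fun x => u x / (1 - t * u x)) :
    ∀ x ∈ Set.Ioo a b,
      DifferentiableAt ℝ v x ∧ DifferentiableAt ℝ (deriv v) x ∧
      x * v x * deriv (deriv v) x = 2 * deriv v x * (x * deriv v x + v x) := by
  subst hv
  have hv' : ∀ y ∈ Set.Ioo a b, HasDerivAt (fun x => u x / (1 - t * u x))
      (deriv u y / (1 - t * u y) ^ 2) y :=
    fun y hy => hasDerivAt_div_one_sub_mul (hu₁ y hy).hasDerivAt (hne y hy)
  intro x hx
  have hv'' := hasDerivAt_deriv_of_eventually_hasDerivAt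
    (eventually_of_mem (isOpen_Ioo.mem_nhds hx) hv')
    (hasDerivAt_div_one_sub_mul_sq (hu₁ x hx).hasDerivAt (hu₂ x hx).hasDerivAt (hne x hx))
  refine ⟨(hv' x hx).differentiableAt, hv''.differentiableAt, ?_⟩
  rw [hv''.deriv, (hv' x hx).deriv]
  exact xyy''_ode_div_one_sub_mul (hne x hx) (hode x hx)
end

section
/- Fix t ∈ ℝ and let u : ℝ → ℝ be twice differentiable on an open interval I with x·u(x)·u″(x) = 2·u′(x)·(x·u′(x) + u(x)) and 1 − t·x³·u(x) ≠ 0 for all x ∈ I. Then the function v(x) = u(x)/(1 − t·x³·u(x)) is twice differentiable on I and satisfies x·v(x)·v″(x) = 2·v′(x)·(x·v′(x) + v(x)) for all x ∈ I. (This expresses that x³y²∂_y is a point symmetry of the ODE x y y″ = 2 y′ (x y′ + y).) -/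
/-!
Where `u ≠ 0`, the substitution `w = 1/u` turns `x y y″ = 2 y′ (x y′ + y)` into the linear
equation `x w″ = 2 w′`, and the transformation `u ↦ u / (1 - t x³ u)` becomes
`w ↦ w - t x³`, which preserves `x w″ = 2 w′` because `x (x³)″ = 6 x² = 2 (x³)′`.
Since `u` may vanish, one verifies the equation for `v` directly instead: compute `v′` and `v″`
by the quotient rule and clear denominators.
-/

open Filter Topology

/-- The time-`t` flow of the vector field `x³y²∂_y` (solving `y′ = x³y²` in `t`), applied to `u`. -/
noncomputable def x3ySqFlow (t : ℝ) (u : ℝ → ℝ) (x : ℝ) : ℝ :=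
  u x / (1 - t * x ^ 3 * u x)

section
variable {t x : ℝ} {u : ℝ → ℝ}

theorem hasDerivAt_one_sub_mul_pow_three_mul {u' : ℝ} (hu : HasDerivAt u u' x) :
    HasDerivAt (fun z => 1 - t * z ^ 3 * u z) (-(t * (3 * x ^ 2 * u x + x ^ 3 * u'))) x :=
  ((((hasDerivAt_pow 3 x).const_mul t).fun_mul hu).const_sub 1).congr_deriv (by norm_num; ring)

theorem hasDerivAt_x3ySqFlow {u' : ℝ} (hu : HasDerivAt u u' x)
    (hne : 1 - t * x ^ 3 * u x ≠ 0) :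
    HasDerivAt (x3ySqFlow t u)
      ((u' + 3 * t * x ^ 2 * u x ^ 2) / (1 - t * x ^ 3 * u x) ^ 2) x :=
  (hu.div (hasDerivAt_one_sub_mul_pow_three_mul hu) hne).congr_deriv (by ring)

theorem deriv_x3ySqFlow_eventuallyEq (hu : ∀ᶠ y in 𝓝 x, DifferentiableAt ℝ u y)
    (hne : 1 - t * x ^ 3 * u x ≠ 0) :
    deriv (x3ySqFlow t u) =ᶠ[𝓝 x]
      fun y => (deriv u y + 3 * t * y ^ 2 * u y ^ 2) / (1 - t * y ^ 3 * u y) ^ 2 := by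
  have hcont : ContinuousAt (fun z => 1 - t * z ^ 3 * u z) x :=
    (hasDerivAt_one_sub_mul_pow_three_mul hu.self_of_nhds.hasDerivAt).continuousAt
  filter_upwards [hu, hcont.eventually_ne hne] with y hy hney
  exact (hasDerivAt_x3ySqFlow hy.hasDerivAt hney).deriv

theorem hasDerivAt_deriv_x3ySqFlow {u'' : ℝ} (hu : ∀ᶠ y in 𝓝 x, DifferentiableAt ℝ u y)
    (hne : 1 - t * x ^ 3 * u x ≠ 0) (hu' : HasDerivAt (deriv u) u'' x) :
    HasDerivAt (deriv (x3ySqFlow t u))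
      (((u'' + 6 * t * x * u x ^ 2 + 6 * t * x ^ 2 * u x * deriv u x) * (1 - t * x ^ 3 * u x)
        + 2 * (deriv u x + 3 * t * x ^ 2 * u x ^ 2) * (t * (3 * x ^ 2 * u x + x ^ 3 * deriv u x)))
        / (1 - t * x ^ 3 * u x) ^ 3) x := by
  have hux := hu.self_of_nhds.hasDerivAt
  have hnum : HasDerivAt (fun y => deriv u y + 3 * t * y ^ 2 * u y ^ 2)
      (u'' + 6 * t * x * u x ^ 2 + 6 * t * x ^ 2 * u x * deriv u x) x :=
    (hu'.fun_add (((hasDerivAt_pow 2 x).const_mul (3 * t)).fun_mul (hux.fun_pow 2))).congr_deriv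
      (by norm_num; ring)
  have hden := (hasDerivAt_one_sub_mul_pow_three_mul (t := t) hux).fun_pow 2
  refine ((hnum.div hden (pow_ne_zero 2 hne)).congr_of_eventuallyEq
    (deriv_x3ySqFlow_eventuallyEq hu hne)).congr_deriv ?_
  field_simp
  ring

theorem x3ySqFlow_ode_of_ode {u u₁ u₂ : ℝ} (hne : 1 - t * x ^ 3 * u ≠ 0)
    (hode : x * u * u₂ = 2 * u₁ * (x * u₁ + u)) :
    x * (u / (1 - t * x ^ 3 * u)) *
      (((u₂ + 6 * t * x * u ^ 2 + 6 * t * x ^ 2 * u * u₁) * (1 - t * x ^ 3 * u)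
        + 2 * (u₁ + 3 * t * x ^ 2 * u ^ 2) * (t * (3 * x ^ 2 * u + x ^ 3 * u₁)))
        / (1 - t * x ^ 3 * u) ^ 3) =
      2 * ((u₁ + 3 * t * x ^ 2 * u ^ 2) / (1 - t * x ^ 3 * u) ^ 2) *
        (x * ((u₁ + 3 * t * x ^ 2 * u ^ 2) / (1 - t * x ^ 3 * u) ^ 2)
          + u / (1 - t * x ^ 3 * u)) := by
  -- naming the denominator keeps `field_simp` from expanding its powers
  set D := 1 - t * x ^ 3 * u with hD
  field_simp
  rw [hD]
  linear_combination (1 - t * x ^ 3 * u) * hode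

end

/-- `x³y²∂_y` is a point symmetry of the ODE `x y y″ = 2 y′ (x y′ + y)`: the
transformed solution `v(x) = u(x)/(1 − t·x³·u(x))` again satisfies the
equation. -/
theorem x3y_sq_dy_symmetry_of_xyy''_ode (t : ℝ) (a b : ℝ) (u : ℝ → ℝ)
    (hu₁ : ∀ x ∈ Set.Ioo a b, DifferentiableAt ℝ u x)
    (hu₂ : ∀ x ∈ Set.Ioo a b, DifferentiableAt ℝ (deriv u) x)
    (hode : ∀ x ∈ Set.Ioo a b,
      x * u x * deriv (deriv u) x = 2 * deriv u x * (x * deriv u x + u x))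
    (hne : ∀ x ∈ Set.Ioo a b, 1 - t * x ^ 3 * u x ≠ 0)
    (v : ℝ → ℝ)
    (hv : v = fun x => u x / (1 - t * x ^ 3 * u x)) :
    ∀ x ∈ Set.Ioo a b,
      DifferentiableAt ℝ v x ∧ DifferentiableAt ℝ (deriv v) x ∧
      x * v x * deriv (deriv v) x = 2 * deriv v x * (x * deriv v x + v x) := by
  intro x hx
  obtain rfl : v = x3ySqFlow t u := hv
  have hu_near : ∀ᶠ y in 𝓝 x, DifferentiableAt ℝ u y :=
    eventually_of_mem (isOpen_Ioo.mem_nhds hx) hu₁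
  have hv₁ := hasDerivAt_x3ySqFlow (hu₁ x hx).hasDerivAt (hne x hx)
  have hv₂ := hasDerivAt_deriv_x3ySqFlow hu_near (hne x hx) (hu₂ x hx).hasDerivAt
  refine ⟨hv₁.differentiableAt, hv₂.differentiableAt, ?_⟩
  rw [hv₂.deriv, hv₁.deriv]
  exact x3ySqFlow_ode_of_ode (hne x hx) (hode x hx)
end
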